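/- arXiv:2401.14492 — 9 statements merged into one kernel-verified Lean document; each statement's English description precedes it below -/
import Mathlib

section
/- Let P(X) = X⁴ + bX² + d be a polynomial over a field K of characteristic ≠ 2 with roots ±α, ±β in a splitting field. Then P is irreducible over K if and only if none of b² - 4d, -b + 2√d, -b - 2√d is a square in K (where √d denotes a fixed square root of d in the splitting field, interpreted so that the latter two conditions mean α + β ∉ K and α - β ∉ K). -/
/-!
A monic quartic is reducible exactly when it has a monic factor of degree one or two. Comparing
coefficients, a factorization of `X⁴ + bX² + d` into monic quadratics is either
`(X² + q)(X² + s)` with `q + s = b`, `qs = d`, making `b² - 4d = (q - s)²` a square, or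
`(X² + pX + q)(X² - pX + q)` with `q² = d`, `2q - p² = b`; a root `γ ∈ K` also makes
`b² - 4d = (2γ² + b)²` a square. In the splitting field `q = ±αβ`, hence
`p² = 2q + α² + β² = (α ± β)²`: the second kind of factorization exists exactly when `α + β` or
`α - β` lies in `K`, and `α - β` is handled as `α + (-β)`.
-/

open Polynomial

namespace Polynomial

theorem Monic.eq_X_sq_add_C_mul_X_add_C {R : Type*} [Semiring R] {p : R[X]} (hm : p.Monic)
    (hnd : p.natDegree = 2) : p = X ^ 2 + C (p.coeff 1) * X + C (p.coeff 0) := by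
  rw [p.as_sum_range_C_mul_X_pow, hnd, Finset.sum_range_succ, Finset.sum_range_succ,
    Finset.sum_range_one, ← hnd, hm.coeff_natDegree, hnd]
  simp [add_comm, add_left_comm]

section CommRing

variable {R : Type*} [CommRing R]

theorem quadratic_mul_quadratic_eq_biquadratic_iff (p q r s b d : R) :
    (X ^ 2 + C p * X + C q) * (X ^ 2 + C r * X + C s) = X ^ 4 + C b * X ^ 2 + C d ↔
      p + r = 0 ∧ q + s + p * r = b ∧ p * s + q * r = 0 ∧ q * s = d := by
  have hexpand : (X ^ 2 + C p * X + C q) * (X ^ 2 + C r * X + C s) =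
      X ^ 4 + C (p + r) * X ^ 3 + C (q + s + p * r) * X ^ 2 + C (p * s + q * r) * X +
        C (q * s) := by
    simp only [map_add, map_mul]; ring
  rw [hexpand]
  constructor
  · intro h
    have hcoeff (n : ℕ) := congr(coeff $h n)
    simp only [coeff_add, coeff_C_mul, coeff_X_pow, coeff_X, coeff_C] at hcoeff
    refine ⟨?_, ?_, ?_, ?_⟩
    · simpa using hcoeff 3
    · simpa using hcoeff 2
    · simpa using hcoeff 1
    · simpa using hcoeff 0
  · rintro ⟨h3, rfl, h1, rfl⟩
    rw [h3, h1]
    simp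

theorem biquadratic_eq_prod_iff (b d α β : R) :
    X ^ 4 + C b * X ^ 2 + C d = (X - C α) * (X + C α) * (X - C β) * (X + C β) ↔
      b = -(α ^ 2 + β ^ 2) ∧ d = α ^ 2 * β ^ 2 := by
  have hpair : (X - C α) * (X + C α) * (X - C β) * (X + C β) =
      (X ^ 2 + C (-(α + β)) * X + C (α * β)) * (X ^ 2 + C (α + β) * X + C (α * β)) := by
    simp only [map_neg, map_add, map_mul]; ring
  rw [hpair, eq_comm, quadratic_mul_quadratic_eq_biquadratic_iff]
  constructor
  · rintro ⟨-, hb, -, hd⟩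
    constructor
    · linear_combination -hb
    · linear_combination -hd
  · rintro ⟨rfl, rfl⟩
    refine ⟨?_, ?_, ?_, ?_⟩ <;> ring

end CommRing

section Field

variable {K : Type*} [Field K]

theorem not_irreducible_quadratic_mul_quadratic (p q r s : K) :
    ¬ Irreducible ((X ^ 2 + C p * X + C q) * (X ^ 2 + C r * X + C s)) := by
  intro h
  have hdeg (u v : K) : (X ^ 2 + C u * X + C v).natDegree = 2 := by compute_degree!
  rcases h.isUnit_or_isUnit rfl with hu | hu <;> simpa [hdeg] using natDegree_eq_zero_of_isUnit hu

theorem exists_of_not_irreducible_biquadratic {b d : K}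
    (h : ¬ Irreducible (X ^ 4 + C b * X ^ 2 + C d)) :
    (∃ c : K, c ^ 2 = b ^ 2 - 4 * d) ∨ ∃ p q : K, q ^ 2 = d ∧ 2 * q - p ^ 2 = b := by
  have hmon : (X ^ 4 + C b * X ^ 2 + C d).Monic := by monicity!
  have hdeg : (X ^ 4 + C b * X ^ 2 + C d).natDegree = 4 := by compute_degree!
  have hne : X ^ 4 + C b * X ^ 2 + C d ≠ 1 := fun h1 => by simp [h1] at hdeg
  obtain ⟨f, g, hf, hg, hfg, hgdeg⟩ : ∃ f g : K[X], f.Monic ∧ g.Monic ∧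
      f * g = X ^ 4 + C b * X ^ 2 + C d ∧ (g.natDegree = 1 ∨ g.natDegree = 2) := by
    rw [hmon.irreducible_iff_natDegree', hdeg] at h
    push Not at h
    obtain ⟨f, g, hf, hg, hfg, hgdeg⟩ := h hne
    rw [Finset.mem_Ioc] at hgdeg
    exact ⟨f, g, hf, hg, hfg, by omega⟩
  rcases hgdeg with hg1 | hg2
  · obtain ⟨a, rfl⟩ : ∃ a, g = X + C a := ⟨_, hg.eq_X_add_C hg1⟩
    have hroot : (-a) ^ 4 + b * (-a) ^ 2 + d = 0 := by
      simpa using congr(eval (-a) $hfg).symm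
    exact Or.inl ⟨2 * a ^ 2 + b, by linear_combination 4 * hroot⟩
  · have hf2 : f.natDegree = 2 := by
      have := hf.natDegree_mul hg
      rw [hfg, hdeg, hg2] at this
      omega
    rw [hf.eq_X_sq_add_C_mul_X_add_C hf2, hg.eq_X_sq_add_C_mul_X_add_C hg2,
      quadratic_mul_quadratic_eq_biquadratic_iff] at hfg
    set p := f.coeff 1
    set q := f.coeff 0
    set r := g.coeff 1
    set s := g.coeff 0
    obtain ⟨h3, h2, h1, h0⟩ := hfg
    rcases mul_eq_zero.1 (show p * (s - q) = 0 by linear_combination h1 - q * h3) with hp | hsq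
    · exact Or.inl ⟨q - s, by
        linear_combination (q + s + p * r + b) * h2 - 4 * h0 - r * (2 * (q + s) + p * r) * hp⟩
    · exact Or.inr ⟨p, q, by linear_combination h0 - q * hsq,
        by linear_combination h2 - hsq - p * h3⟩

theorem not_irreducible_biquadratic_iff (h2 : (2 : K) ≠ 0) (b d : K) :
    ¬ Irreducible (X ^ 4 + C b * X ^ 2 + C d) ↔
      (∃ c : K, c ^ 2 = b ^ 2 - 4 * d) ∨ ∃ p q : K, q ^ 2 = d ∧ 2 * q - p ^ 2 = b := by
  refine ⟨exists_of_not_irreducible_biquadratic, ?_⟩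
  rintro (⟨c, hc⟩ | ⟨p, q, hq, hpq⟩)
  · rw [← (quadratic_mul_quadratic_eq_biquadratic_iff 0 ((b + c) / 2) 0 ((b - c) / 2) b d).2
      ⟨by ring, by field_simp; ring, by ring, by field_simp; linear_combination -hc⟩]
    exact not_irreducible_quadratic_mul_quadratic _ _ _ _
  · rw [← (quadratic_mul_quadratic_eq_biquadratic_iff p q (-p) q b d).2
      ⟨by ring, by linear_combination hpq, by ring, by linear_combination hq⟩]
    exact not_irreducible_quadratic_mul_quadratic _ _ _ _

end Field

end Polynomial

section Algebra

variable {K L : Type*} [Field K] [Field L] [Algebra K L]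

theorem mem_range_algebraMap_of_sq_eq {p : K} {x : L} (h : algebraMap K L p ^ 2 = x ^ 2) :
    x ∈ Set.range (algebraMap K L) := by
  rcases sq_eq_sq_iff_eq_or_eq_neg.1 h with h | h
  · exact ⟨p, h⟩
  · exact ⟨-p, by rw [map_neg, h, neg_neg]⟩

theorem add_mem_range_algebraMap_iff (h2 : (2 : K) ≠ 0) {b : K} {α β : L}
    (hb : algebraMap K L b = -(α ^ 2 + β ^ 2)) :
    α + β ∈ Set.range (algebraMap K L) ↔
      ∃ p q : K, algebraMap K L q = α * β ∧ 2 * q - p ^ 2 = b := by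
  constructor
  · rintro ⟨s, hs⟩
    refine ⟨s, (s ^ 2 + b) / 2, ?_, by field_simp; ring⟩
    have h2L : (2 : L) ≠ 0 := by
      simpa only [map_ofNat, map_zero] using (algebraMap K L).injective.ne h2
    rw [map_div₀, map_add, map_pow, hs, hb, map_ofNat]
    field_simp
    ring
  · rintro ⟨p, q, hq, rfl⟩
    refine mem_range_algebraMap_of_sq_eq (p := p) ?_
    rw [map_sub, map_mul, map_pow, hq, map_ofNat] at hb
    linear_combination -hb

end Algebra

theorem stmt_1 (K L : Type*) [Field K] [Field L] [Algebra K L]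
    (hchar : ringChar K ≠ 2) (b d : K) (α β : L)
    (hroots : (X ^ 4 + C b * X ^ 2 + C d).map (algebraMap K L)
      = (X - C α) * (X + C α) * (X - C β) * (X + C β)) :
    Irreducible (X ^ 4 + C b * X ^ 2 + C d) ↔
      (¬ ∃ c : K, c ^ 2 = b ^ 2 - 4 * d) ∧
      α + β ∉ Set.range (algebraMap K L) ∧
      α - β ∉ Set.range (algebraMap K L) := by
  obtain ⟨hb, hd⟩ := (biquadratic_eq_prod_iff _ _ α β).1 (by simpa using hroots)
  have h2 : (2 : K) ≠ 0 := Ring.two_ne_zero hchar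
  have hb' : algebraMap K L b = -(α ^ 2 + (-β) ^ 2) := by rw [hb, neg_sq]
  have hsq (q : K) : q ^ 2 = d ↔ algebraMap K L q = α * β ∨ algebraMap K L q = α * -β := by
    rw [← (algebraMap K L).injective.eq_iff, map_pow, hd, mul_neg, ← sq_eq_sq_iff_eq_or_eq_neg,
      mul_pow]
  rw [← not_iff_not, not_irreducible_biquadratic_iff h2, sub_eq_add_neg α β,
    add_mem_range_algebraMap_iff h2 hb, add_mem_range_algebraMap_iff h2 hb']
  simp only [hsq, or_and_right, exists_or, not_and_or, not_not]
end

section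
/- Let P(X) = X⁴ + bX² + d be a polynomial over a field K of characteristic ≠ 2 with roots ±α, ±β in a splitting field. If α² ∉ K and αβ ∉ K, then P is irreducible over K. -/
/-!
Over `L`, a monic factor of `P` over `K` of degree 1 or 2 splits into linear factors
`X - γ` with `γ ∈ {±α, ±β}`, and its constant term (for degree 1, the square of its root) is
a product of two such roots lying in `K`. Up to sign such a product is `α²`, `αβ` or `β²`,
none of which lies in `K`: for `β²` because `α² + β² = -b`. Since a reducible quartic has a
factor of degree 1 or 2, `P` is irreducible.
-/

open Polynomial

theorem mul_notMem_of_eq_or_eq_neg {R S : Type*} [CommRing R] [SetLike S R] [NegMemClass S R]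
    {F : S} {α β x y : R} (hα : α ^ 2 ∉ F) (hαβ : α * β ∉ F) (hβ : β ^ 2 ∉ F)
    (hx : x = α ∨ x = -α ∨ x = β ∨ x = -β) (hy : y = α ∨ y = -α ∨ y = β ∨ y = -β) :
    x * y ∉ F := by
  rcases hx with hx | hx | hx | hx <;> rcases hy with hy | hy | hy | hy <;>
    simp only [hx, hy, neg_mul, mul_neg, neg_neg, neg_mem_iff, ← sq, neg_sq, mul_comm β α] <;>
    assumption

theorem eq_or_eq_neg_of_mem_roots_mul {R : Type*} [CommRing R] [IsDomain R] {α β x : R}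
    (hx : x ∈ ((X - C α) * (X + C α) * (X - C β) * (X + C β)).roots) :
    x = α ∨ x = -α ∨ x = β ∨ x = -β := by
  simp only [mem_roots', IsRoot, eval_mul, eval_sub, eval_add, eval_X, eval_C, mul_eq_zero,
    sub_eq_zero, add_eq_zero_iff_eq_neg] at hx
  tauto

section

variable {K L : Type*} [Field K] [Field L] [Algebra K L]

theorem Polynomial.Monic.exists_mul_mem_bot_of_natDegree_le_two {q : K[X]} (hq : q.Monic)
    (hs : (q.map (algebraMap K L)).Splits) (h0 : 0 < q.natDegree) (h2 : q.natDegree ≤ 2) :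
    ∃ x ∈ (q.map (algebraMap K L)).roots, ∃ y ∈ (q.map (algebraMap K L)).roots,
      x * y ∈ (⊥ : IntermediateField K L) := by
  have hcoeff := hs.coeff_zero_eq_prod_roots_of_monic (hq.map _)
  have hcard := hs.natDegree_eq_card_roots
  rw [coeff_map, hq.natDegree_map] at hcoeff
  rw [hq.natDegree_map] at hcard
  obtain h | h : q.natDegree = 1 ∨ q.natDegree = 2 := by omega
  · rw [h] at hcard hcoeff
    obtain ⟨x, hx⟩ := Multiset.card_eq_one.mp hcard.symm
    refine ⟨x, by simp [hx], x, by simp [hx], ?_⟩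
    rw [hx, Multiset.prod_singleton] at hcoeff
    rw [show x = algebraMap K L (-q.coeff 0) by rw [map_neg, hcoeff]; ring, ← map_mul]
    exact IntermediateField.algebraMap_mem _ _
  · rw [h] at hcard hcoeff
    obtain ⟨x, y, hxy⟩ := Multiset.card_eq_two.mp hcard.symm
    refine ⟨x, by simp [hxy], y, by simp [hxy], ?_⟩
    rw [hxy, Multiset.prod_pair] at hcoeff
    rw [show x * y = algebraMap K L (q.coeff 0) by rw [hcoeff]; ring]
    exact IntermediateField.algebraMap_mem _ _

theorem Polynomial.Monic.irreducible_of_forall_mul_roots_notMem_bot {p : K[X]} (hp : p.Monic)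
    (hp1 : p ≠ 1) (h5 : p.natDegree ≤ 5) (hs : (p.map (algebraMap K L)).Splits)
    (hroots : ∀ x ∈ (p.map (algebraMap K L)).roots, ∀ y ∈ (p.map (algebraMap K L)).roots,
      x * y ∉ (⊥ : IntermediateField K L)) :
    Irreducible p := by
  rw [hp.irreducible_iff_lt_natDegree_lt hp1]
  intro q hq hdeg hqp
  rw [Finset.mem_Ioc] at hdeg
  have hqp' := map_dvd (algebraMap K L) hqp
  have hp0 := (hp.map (algebraMap K L)).ne_zero
  have hsub := roots.le_of_dvd hp0 hqp'
  obtain ⟨x, hx, y, hy, hxy⟩ :=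
    hq.exists_mul_mem_bot_of_natDegree_le_two (hs.of_dvd hp0 hqp') hdeg.1 (by omega)
  exact hroots x (Multiset.mem_of_le hsub hx) y (Multiset.mem_of_le hsub hy) hxy

end

theorem stmt_2_general (K L : Type*) [Field K] [Field L] [Algebra K L]
    (b d : K) (α β : L)
    (hroots : (X ^ 4 + C b * X ^ 2 + C d).map (algebraMap K L)
      = (X - C α) * (X + C α) * (X - C β) * (X + C β))
    (hα : α ^ 2 ∉ Set.range (algebraMap K L))
    (hαβ : α * β ∉ Set.range (algebraMap K L)) :
    Irreducible (X ^ 4 + C b * X ^ 2 + C d) := by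
  have hdeg : (X ^ 4 + C b * X ^ 2 + C d).natDegree = 4 := by compute_degree!
  have hmonic : (X ^ 4 + C b * X ^ 2 + C d).Monic := by monicity!
  have hb : algebraMap K L b = -(α ^ 2 + β ^ 2) := by
    have h2 := congrArg (coeff · 2) hroots
    rw [show (X - C α) * (X + C α) * (X - C β) * (X + C β)
        = X ^ 4 + C (-(α ^ 2 + β ^ 2)) * X ^ 2 + C (α ^ 2 * β ^ 2) by
      simp only [map_neg, map_add, map_mul, map_pow]; ring] at h2
    simp only [coeff_map, coeff_add, coeff_C_mul, coeff_X_pow, coeff_C] at h2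
    norm_num at h2
    linear_combination h2
  rw [← IntermediateField.mem_bot] at hα hαβ
  have hβ : β ^ 2 ∉ (⊥ : IntermediateField K L) := fun h ↦ hα <| by
    rw [show α ^ 2 = -algebraMap K L b - β ^ 2 by rw [hb]; ring]
    exact sub_mem (neg_mem (IntermediateField.algebraMap_mem _ _)) h
  have hsplit : ((X ^ 4 + C b * X ^ 2 + C d).map (algebraMap K L)).Splits := by
    rw [hroots]
    exact (((Splits.X_sub_C _).mul (.X_add_C _)).mul (.X_sub_C _)).mul (.X_add_C _)
  refine hmonic.irreducible_of_forall_mul_roots_notMem_bot (fun h ↦ by simp [h] at hdeg)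
    (by omega) hsplit ?_
  rw [hroots]
  exact fun x hx y hy ↦ mul_notMem_of_eq_or_eq_neg hα hαβ hβ
    (eq_or_eq_neg_of_mem_roots_mul hx) (eq_or_eq_neg_of_mem_roots_mul hy)

theorem stmt_2 (K L : Type*) [Field K] [Field L] [Algebra K L]
    (hchar : ringChar K ≠ 2) (b d : K) (α β : L)
    (hroots : (X ^ 4 + C b * X ^ 2 + C d).map (algebraMap K L)
      = (X - C α) * (X + C α) * (X - C β) * (X + C β))
    (hα : α ^ 2 ∉ Set.range (algebraMap K L))
    (hαβ : α * β ∉ Set.range (algebraMap K L)) :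
    Irreducible (X ^ 4 + C b * X ^ 2 + C d) :=
  stmt_2_general K L b d α β hroots hα hαβ
end

section
/- Let F₀ be a number field and (Fₙ)ₙ≥0 a 2-tower (so [F_{n+1}:F_n] = 2 for all n). The tower is not thin if and only if there exists n ≥ 2 such that F_n/F_{n-2} is Galois with Galois group the Klein four group. -/
/-!
A quadratic extension in characteristic zero is generated by a square root, and the compositum of
two distinct quadratic extensions is Galois of degree 4 with every automorphism of order at most 2,
i.e. biquadratic. Hence if `y ^ 2 ∈ F j` and `y ∈ F (j + 2) \ F (j + 1)`, then
`F (j + 2) = F (j + 1) ⊔ F j⟮y⟯` is biquadratic over `F j`.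

If no step `F (n + 2) / F n` is biquadratic, descending induction shows that a square root of an
element of `F n` lying anywhere in the tower already lies in `F (n + 1)`. Let `F n < M ≤ F m`.
Being built from `F n` by adjoining square roots, `F m` lies in a Galois extension of `F n` of
2-power degree, and in its Galois group, a 2-group, the subgroup fixing `M` lies in a subgroup of
index 2. So `M` contains a quadratic extension `F n⟮y⟯` of `F n`, which then must be `F (n + 1)`.
Climbing the tower, `M` is some `F j`: the tower is thin.

Conversely, the Klein four group has three subgroups of order 2, so a biquadratic `F (n + 2) / F n`
has a quadratic subextension other than `F (n + 1)`, and by its degree it is no `F j`.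
-/

open IntermediateField Module Polynomial

namespace IntermediateField

variable {K L : Type*} [Field K] [Field L] [Algebra K L]

theorem eq_or_eq_of_relfinrank_prime {A M B : IntermediateField K L} (hAM : A ≤ M) (hMB : M ≤ B)
    (hp : (relfinrank A B).Prime) : M = A ∨ M = B := by
  have hmul := relfinrank_mul_relfinrank hAM hMB
  rcases hp.eq_one_or_self_of_dvd _ (Dvd.intro _ hmul) with h | h
  · exact .inl (le_antisymm (relfinrank_eq_one_iff.mp h) hAM)
  · rw [h, Nat.mul_eq_left hp.ne_zero] at hmul
    exact .inr (le_antisymm hMB (relfinrank_eq_one_iff.mp hmul))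

theorem sup_adjoin_eq_of_relfinrank_prime {A B : IntermediateField K L} (hAB : A ≤ B)
    (hp : (relfinrank A B).Prime) {y : L} (hyB : y ∈ B) (hyA : y ∉ A) : A ⊔ K⟮y⟯ = B := by
  refine (eq_or_eq_of_relfinrank_prime le_sup_left
    (sup_le hAB (adjoin_simple_le_iff.mpr hyB)) hp).resolve_left fun h ↦ hyA ?_
  exact h ▸ (le_sup_right : K⟮y⟯ ≤ A ⊔ K⟮y⟯) (mem_adjoin_simple_self K y)

theorem relfinrank_sup_adjoin_eq_natDegree (A : IntermediateField K L) {y : L}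
    (hy : IsIntegral A y) : relfinrank A (A ⊔ K⟮y⟯) = (minpoly A y).natDegree := by
  have hle : A ≤ A ⊔ K⟮y⟯ := le_sup_left
  have hext : extendScalars hle = A⟮y⟯ := by
    apply restrictScalars_injective K
    rw [extendScalars_restrictScalars, restrictScalars_adjoin_eq_sup]
  rw [relfinrank_eq_finrank_of_le hle, hext, adjoin.finrank hy]

theorem isIntegral_of_sq_mem {A : IntermediateField K L} {y : L} (hy : y ^ 2 ∈ A) :
    IsIntegral A y :=
  ⟨X ^ 2 - C ⟨y ^ 2, hy⟩, monic_X_pow_sub_C _ two_ne_zero, by simp⟩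

theorem relfinrank_sup_adjoin_dvd_two (A : IntermediateField K L) {y : L} (hy : y ^ 2 ∈ A) :
    relfinrank A (A ⊔ K⟮y⟯) ∣ 2 := by
  have hint := isIntegral_of_sq_mem hy
  rw [relfinrank_sup_adjoin_eq_natDegree A hint]
  have hdvd : minpoly A y ∣ X ^ 2 - C ⟨y ^ 2, hy⟩ := minpoly.dvd _ _ (by simp)
  have hle := natDegree_le_of_dvd hdvd (X_pow_sub_C_ne_zero two_pos _)
  rw [natDegree_X_pow_sub_C] at hle
  interval_cases h : (minpoly A y).natDegree
  · exact absurd h (minpoly.natDegree_pos hint).ne'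
  · exact one_dvd 2
  · exact dvd_rfl

theorem relfinrank_sup_adjoin_dvd_two_pow (A : IntermediateField K L) (s : Finset L)
    (hs : ∀ y ∈ s, y ^ 2 ∈ A) : relfinrank A (A ⊔ adjoin K (s : Set L)) ∣ 2 ^ s.card := by
  classical
  induction s using Finset.induction_on with
  | empty => simp
  | @insert y s hy ih =>
    set B := A ⊔ adjoin K (s : Set L)
    have hAB : A ≤ B := le_sup_left
    have hsup : A ⊔ adjoin K ((insert y s : Finset L) : Set L) = B ⊔ K⟮y⟯ := by
      rw [Finset.coe_insert, Set.insert_eq, adjoin_union, sup_comm K⟮y⟯, ← sup_assoc]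
    rw [hsup, ← relfinrank_mul_relfinrank hAB le_sup_left, Finset.card_insert_of_notMem hy,
      pow_succ]
    exact mul_dvd_mul (ih fun z hz ↦ hs z (Finset.mem_insert_of_mem hz))
      (relfinrank_sup_adjoin_dvd_two B (hAB (hs y (Finset.mem_insert_self y s))))

theorem exists_sq_mem_sup_adjoin_eq [NeZero (2 : L)] {A B : IntermediateField K L} (hAB : A ≤ B)
    (h2 : relfinrank A B = 2) : ∃ y ∈ B, y ^ 2 ∈ A ∧ A ⊔ K⟮y⟯ = B := by
  have hp : (relfinrank A B).Prime := h2 ▸ Nat.prime_two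
  obtain ⟨x, hxB, hxA⟩ := SetLike.exists_of_lt (lt_of_le_of_ne hAB fun h ↦ by
    rw [h, relfinrank_self] at h2; omega)
  have : FiniteDimensional A (extendScalars hAB) :=
    Module.finite_of_finrank_eq_succ (relfinrank_eq_finrank_of_le hAB ▸ h2)
  have hint : IsIntegral A x := (IsIntegral.of_finite A (⟨x, hxB⟩ : extendScalars hAB)).map
    (extendScalars hAB).val
  have hdeg : (minpoly A x).natDegree = 2 := by
    rw [← relfinrank_sup_adjoin_eq_natDegree A hint,
      sup_adjoin_eq_of_relfinrank_prime hAB hp hxB hxA, h2]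
  -- `x ^ 2 + b x + c = 0`, so `y = 2 x + b` has `y ^ 2 = b ^ 2 - 4 c`
  set b : L := algebraMap A L ((minpoly A x).coeff 1)
  set c : L := algebraMap A L ((minpoly A x).coeff 0)
  have hx : x ^ 2 + b * x + c = 0 := by
    have h := minpoly.aeval A x
    rw [aeval_eq_sum_range, hdeg, Finset.sum_range_succ, Finset.sum_range_succ,
      Finset.sum_range_one, ← hdeg, (minpoly.monic hint).coeff_natDegree, hdeg] at h
    simp only [Algebra.smul_def, map_one] at h
    linear_combination h
  have hb : b ∈ A := ((minpoly A x).coeff 1).2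
  have hyB : 2 * x + b ∈ B := add_mem (mul_mem (ofNat_mem B 2) hxB) (hAB hb)
  have hyA : 2 * x + b ∉ A := fun h ↦ hxA <| by
    have : x = (2 * x + b - b) / 2 := eq_div_of_mul_eq two_ne_zero (by ring)
    rw [this]
    exact div_mem (sub_mem h hb) (ofNat_mem A 2)
  refine ⟨2 * x + b, hyB, ?_, sup_adjoin_eq_of_relfinrank_prime hAB hp hyB hyA⟩
  have : (2 * x + b) ^ 2 = b ^ 2 - 4 * c := by linear_combination 4 * hx
  rw [this]
  exact sub_mem (pow_mem hb 2) (mul_mem (ofNat_mem A 4) ((minpoly A x).coeff 0).2)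

theorem finrank_sup_eq_four {A B : IntermediateField K L} (hA : finrank K A = 2)
    (hB : finrank K B = 2) (hAB : A ≠ B) : finrank K ↥(A ⊔ B) = 4 := by
  have : FiniteDimensional K A := Module.finite_of_finrank_eq_succ hA
  have : FiniteDimensional K B := Module.finite_of_finrank_eq_succ hB
  have hpos : 0 < finrank K ↥(A ⊔ B) := finrank_pos
  have hle := finrank_sup_le A B
  have hmul := finrank_bot_mul_relfinrank (le_sup_left : A ≤ A ⊔ B)
  have hr : relfinrank A (A ⊔ B) ≠ 1 := fun h ↦ hAB <| (eq_of_le_of_finrank_eq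
    (le_sup_right.trans (relfinrank_eq_one_iff.mp h)) (hB.trans hA.symm)).symm
  rw [hA] at hmul hle
  rw [hB] at hle
  omega

section Automorphisms

variable {E : Type*} [Field E] [Algebra K E]

theorem pow_two_mem_fixingSubgroup {C : IntermediateField K E} (hC : finrank K C = 2)
    (σ : E ≃ₐ[K] E) : σ ^ 2 ∈ C.fixingSubgroup := by
  have : Algebra.IsQuadraticExtension K C := ⟨hC⟩
  set τ := AlgEquiv.restrictNormalHom C σ
  have hτ : τ ^ 2 = 1 := by
    have hcard : Nat.card (C ≃ₐ[K] C) ≤ 2 := by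
      rw [Nat.card_eq_fintype_card, ← hC]
      exact AlgEquiv.card_le
    have hle : orderOf τ ≤ 2 := orderOf_le_card.trans hcard
    have hpos := orderOf_pos τ
    rw [← orderOf_dvd_iff_pow_eq_one]
    interval_cases h : orderOf τ
    · exact one_dvd 2
    · exact dvd_rfl
  rw [mem_fixingSubgroup_iff, ← AlgEquiv.restrictNormal_eq_one_iff]
  exact (map_pow (AlgEquiv.restrictNormalHom C) σ 2).trans hτ

theorem pow_two_eq_one_of_sup_eq_top {A B : IntermediateField K E} (hA : finrank K A = 2)
    (hB : finrank K B = 2) (hAB : A ⊔ B = ⊤) (σ : E ≃ₐ[K] E) : σ ^ 2 = 1 := by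
  have h := Subgroup.mem_inf.mpr
    ⟨pow_two_mem_fixingSubgroup hA σ, pow_two_mem_fixingSubgroup hB σ⟩
  rwa [← fixingSubgroup_sup, hAB, fixingSubgroup_top, Subgroup.mem_bot] at h

variable [FiniteDimensional K E] [IsGalois K E]

theorem exists_finrank_eq_two_ne [IsKleinFour (E ≃ₐ[K] E)] {M : IntermediateField K E}
    (hM : M ≠ ⊥) : ∃ X : IntermediateField K E, finrank K X = 2 ∧ X ≠ M := by
  have hfix : M.fixingSubgroup ≠ ⊤ := fun h ↦ hM <| by
    rw [← IsGalois.fixedField_fixingSubgroup M, h, ← fixingSubgroup_bot,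
      IsGalois.fixedField_fixingSubgroup]
  obtain ⟨σ, -, hσ⟩ := SetLike.exists_of_lt (lt_top_iff_ne_top.mpr hfix)
  have hσ2 : orderOf σ = 2 :=
    orderOf_eq_prime (by rw [sq]; exact IsKleinFour.mul_self σ) fun h ↦ hσ (h ▸ one_mem _)
  refine ⟨fixedField (Subgroup.zpowers σ), ?_, fun h ↦ hσ ?_⟩
  · have hmul := finrank_mul_finrank K (fixedField (Subgroup.zpowers σ)) E
    rw [finrank_fixedField_eq_card, Nat.card_zpowers, hσ2, ← IsGalois.card_aut_eq_finrank K E,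
      IsKleinFour.card_four] at hmul
    omega
  · rw [← h, fixingSubgroup_fixedField]
    exact Subgroup.mem_zpowers σ

theorem exists_le_finrank_eq_two {t : ℕ} (hE : finrank K E = 2 ^ t) {M : IntermediateField K E}
    (hM : M ≠ ⊥) : ∃ X ≤ M, finrank K X = 2 := by
  have hG : Nat.card (E ≃ₐ[K] E) = 2 ^ t := by rw [IsGalois.card_aut_eq_finrank, hE]
  have hmul := finrank_mul_finrank K M E
  rw [hE] at hmul
  obtain ⟨s, -, hs⟩ := (Nat.dvd_prime_pow Nat.prime_two).mp (Dvd.intro_left _ hmul)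
  have hM1 : 1 < finrank K M :=
    lt_of_le_of_ne finrank_pos fun h ↦ hM (finrank_eq_one_iff.mp h.symm)
  have hst : s < t := by
    rw [hs] at hmul
    exact (Nat.pow_lt_pow_iff_right one_lt_two).mp (hmul ▸ lt_mul_left (by positivity) hM1)
  have : Fact (Nat.Prime 2) := ⟨Nat.prime_two⟩
  obtain ⟨H, hH, hMH⟩ := Sylow.exists_subgroup_card_pow_prime_le 2
    (hG ▸ pow_dvd_pow 2 (Nat.sub_le t 1)) M.fixingSubgroup
    ((IsGalois.card_fixingSubgroup_eq_finrank M).trans hs) (Nat.le_sub_one_of_lt hst)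
  refine ⟨fixedField H, ?_, ?_⟩
  · exact (fixedField_le hMH).trans (IsGalois.fixedField_fixingSubgroup M).le
  · have hmulH := finrank_mul_finrank K (fixedField H) E
    rw [finrank_fixedField_eq_card, hH, hE, ← Nat.sub_add_cancel (Nat.one_le_of_lt hst),
      pow_succ, mul_comm] at hmulH
    exact Nat.eq_of_mul_eq_mul_left (by positivity) hmulH

end Automorphisms

theorem isGalois_sup_of_finrank_eq_two [PerfectField K] {A B : IntermediateField K L}
    (hA : finrank K A = 2) (hB : finrank K B = 2) : IsGalois K ↥(A ⊔ B) := by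
  have : Algebra.IsQuadraticExtension K A := ⟨hA⟩
  have : Algebra.IsQuadraticExtension K B := ⟨hB⟩
  exact {}

theorem isKleinFour_sup_of_finrank_eq_two [PerfectField K] {A B : IntermediateField K L}
    (hA : finrank K A = 2) (hB : finrank K B = 2) (hAB : A ≠ B) :
    IsKleinFour (↥(A ⊔ B) ≃ₐ[K] ↥(A ⊔ B)) := by
  have := isGalois_sup_of_finrank_eq_two hA hB
  have h4 := finrank_sup_eq_four hA hB hAB
  have : FiniteDimensional K ↥(A ⊔ B) := Module.finite_of_finrank_pos (by omega)
  have hcard : Nat.card (↥(A ⊔ B) ≃ₐ[K] ↥(A ⊔ B)) = 4 := by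
    rw [IsGalois.card_aut_eq_finrank, h4]
  have hsq : ∀ σ : ↥(A ⊔ B) ≃ₐ[K] ↥(A ⊔ B), σ ^ 2 = 1 := by
    refine pow_two_eq_one_of_sup_eq_top (A := restrict le_sup_left) (B := restrict le_sup_right)
      ?_ ?_ ?_
    · rw [← hA]; exact (restrictAlgEquiv _).toLinearEquiv.finrank_eq.symm
    · rw [← hB]; exact (restrictAlgEquiv _).toLinearEquiv.finrank_eq.symm
    · rw [← lift_inj, lift_sup, lift_restrict, lift_restrict, lift_top]
  have : Nontrivial (↥(A ⊔ B) ≃ₐ[K] ↥(A ⊔ B)) := Finite.one_lt_card_iff_nontrivial.mp (by omega)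
  refine ⟨hcard, (Monoid.exponent_eq_prime_iff Nat.prime_two).mpr fun σ hσ ↦ ?_⟩
  exact orderOf_eq_prime (hsq σ) hσ

theorem exists_le_finrank_eq_two_of_le {N M : IntermediateField K L} [FiniteDimensional K N]
    [IsGalois K N] {t : ℕ} (hN : finrank K N = 2 ^ t) (hMN : M ≤ N) (hM : M ≠ ⊥) :
    ∃ X ≤ M, finrank K X = 2 := by
  obtain ⟨X, hX, hX2⟩ := exists_le_finrank_eq_two hN (M := restrict hMN) fun h ↦ hM <| by
    rw [← lift_restrict hMN, h, lift_bot]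
  refine ⟨lift X, ?_, (liftAlgEquiv X).toLinearEquiv.finrank_eq ▸ hX2⟩
  rw [← lift_restrict hMN]
  exact map_mono _ hX

theorem mem_of_aeval_minpoly_eq_zero {N : IntermediateField K L} [Normal K N] {x z : L}
    (hx : x ∈ N) (hz : aeval z (minpoly K x) = 0) : z ∈ N := by
  have hsplit := Normal.splits (F := K) inferInstance (⟨x, hx⟩ : N)
  rw [minpoly_eq] at hsplit
  have hint : IsIntegral K x :=
    isIntegral_iff.mp (Normal.isIntegral (F := K) inferInstance ⟨x, hx⟩)
  have hz' : z ∈ (minpoly K x).rootSet L := mem_rootSet.mpr ⟨minpoly.ne_zero hint, hz⟩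
  rw [← hsplit.image_rootSet N.val] at hz'
  obtain ⟨w, -, rfl⟩ := hz'
  exact w.2

theorem exists_normal_two_pow_of_sq_mem [IsAlgClosed L] {N : IntermediateField K L} [Normal K N]
    {t : ℕ} (hN : finrank K N = 2 ^ t) {y : L} (hy : y ^ 2 ∈ N) :
    ∃ N' : IntermediateField K L, N ≤ N' ∧ y ∈ N' ∧ Normal K N' ∧ ∃ t', finrank K N' = 2 ^ t' := by
  have : FiniteDimensional K N := Module.finite_of_finrank_pos (hN ▸ by positivity)
  have hint : IsIntegral K (y ^ 2) := isIntegral_iff.mp (IsIntegral.of_finite K (⟨y ^ 2, hy⟩ : N))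
  -- the roots of `P` are the square roots of the conjugates of `y ^ 2`, which all lie in `N`
  set P := (minpoly K (y ^ 2)).comp (X ^ 2)
  have hP : P ≠ 0 := ((minpoly.monic hint).comp (monic_X_pow 2) (by simp)).ne_zero
  set R := adjoin K (P.rootSet L)
  have : IsSplittingField K R P := adjoin_rootSet_isSplittingField (IsAlgClosed.splits _)
  have : Normal K R := Normal.of_isSplittingField P
  have hroot : ∀ z ∈ P.rootSet L, z ^ 2 ∈ N := fun z hz ↦
    mem_of_aeval_minpoly_eq_zero hy (by simpa [P, aeval_comp] using (mem_rootSet.mp hz).2)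
  have hyR : y ∈ R := subset_adjoin _ _ (mem_rootSet.mpr ⟨hP, by simp [P, aeval_comp]⟩)
  refine ⟨N ⊔ R, le_sup_left, le_sup_right (a := N) hyR, inferInstance, ?_⟩
  have hfin := P.rootSet_finite L
  have hdvd := relfinrank_sup_adjoin_dvd_two_pow N hfin.toFinset
    fun z hz ↦ hroot z (hfin.mem_toFinset.mp hz)
  rw [hfin.coe_toFinset] at hdvd
  obtain ⟨k, -, hk⟩ := (Nat.dvd_prime_pow Nat.prime_two).mp hdvd
  exact ⟨t + k, by rw [← finrank_bot_mul_relfinrank le_sup_left, hN, hk, pow_add]⟩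

theorem exists_le_of_le_iSup {F : ℕ → IntermediateField K L} (hF : Monotone F)
    {M : IntermediateField K L} [FiniteDimensional K M] (hM : M ≤ ⨆ n, F n) : ∃ m, M ≤ F m := by
  obtain ⟨t, ht, rfl⟩ := fg_def.mp <| fg_of_fg_toSubalgebra M <|
    Subalgebra.fg_of_fg_toSubmodule <| (Submodule.fg_iff_finiteDimensional _).mpr ‹_›
  obtain ⟨s, hs⟩ := CompleteLattice.IsCompactElement.exists_finset_of_le_iSup
    _ (adjoin_finite_isCompactElement ht) F hM
  exact ⟨s.sup id, hs.trans (iSup₂_le fun i hi ↦ hF (Finset.le_sup (f := id) hi))⟩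

end IntermediateField

theorem isKleinFour_iff_nonempty_mulEquiv {G : Type*} [Group G] :
    IsKleinFour G ↔ Nonempty (G ≃* Multiplicative (ZMod 2 × ZMod 2)) :=
  ⟨fun _ ↦ IsKleinFour.nonempty_mulEquiv, fun ⟨e⟩ ↦
    ⟨(Nat.card_congr e.toEquiv).trans IsKleinFour.card_four,
      (Monoid.exponent_eq_of_mulEquiv e).trans IsKleinFour.exponent_two⟩⟩

section Tower

variable {K L : Type*} [Field K] [Field L] [Algebra K L]

def IsThin (F : ℕ → IntermediateField K L) : Prop :=
  ∀ M : IntermediateField K L, F 0 ≤ M → M ≤ ⨆ n, F n → FiniteDimensional K M → ∃ n, M = F n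

def IsBiquadraticAt (F : ℕ → IntermediateField K L) (n : ℕ) : Prop :=
  ∃ h : F n ≤ F (n + 2),
    IsGalois (F n) (extendScalars h) ∧ IsKleinFour (extendScalars h ≃ₐ[F n] extendScalars h)

variable {F : ℕ → IntermediateField K L}

theorem relfinrank_succ_eq_two (hfin : FiniteDimensional K (F 0))
    (hdeg : ∀ n, finrank K (F (n + 1)) = 2 * finrank K (F n)) (hle : ∀ n, F n ≤ F (n + 1))
    (n : ℕ) : relfinrank (F n) (F (n + 1)) = 2 := by
  have hpos : ∀ n, 0 < finrank K (F n) := fun n ↦ by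
    induction n with
    | zero => exact finrank_pos
    | succ n ih => rw [hdeg]; omega
  have hmul := finrank_bot_mul_relfinrank (hle n)
  rw [hdeg, mul_comm 2] at hmul
  exact Nat.eq_of_mul_eq_mul_left (hpos n) hmul

theorem relfinrank_eq_two_pow (hle : ∀ n, F n ≤ F (n + 1))
    (hrel : ∀ n, relfinrank (F n) (F (n + 1)) = 2) {i j : ℕ} (hij : i ≤ j) :
    relfinrank (F i) (F j) = 2 ^ (j - i) := by
  induction j, hij using Nat.le_induction with
  | base => rw [relfinrank_self, Nat.sub_self, pow_zero]
  | succ j hij ih =>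
    rw [← relfinrank_mul_relfinrank (monotone_nat_of_le_succ hle hij) (hle j), ih, hrel,
      Nat.sub_add_comm hij, pow_succ]

theorem finiteDimensional_of_relfinrank_succ (hfin : FiniteDimensional K (F 0))
    (hle : ∀ n, F n ≤ F (n + 1)) (hrel : ∀ n, relfinrank (F n) (F (n + 1)) = 2) (n : ℕ) :
    FiniteDimensional K (F n) := Module.finite_of_finrank_pos <| by
  rw [← finrank_bot_mul_relfinrank (monotone_nat_of_le_succ hle (Nat.zero_le n)),
    relfinrank_eq_two_pow hle hrel (Nat.zero_le n)]
  exact Nat.mul_pos finrank_pos (by positivity)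

theorem eq_add_one_of_relfinrank_eq_two (hle : ∀ n, F n ≤ F (n + 1))
    (hrel : ∀ n, relfinrank (F n) (F (n + 1)) = 2) {n j : ℕ} (h : relfinrank (F n) (F j) = 2) :
    j = n + 1 := by
  rcases le_or_gt j n with hjn | hnj
  · rw [relfinrank_eq_one_iff.mpr (monotone_nat_of_le_succ hle hjn)] at h
    omega
  · rw [relfinrank_eq_two_pow hle hrel hnj.le] at h
    have := Nat.pow_right_injective le_rfl (h.trans (pow_one 2).symm)
    omega

theorem finrank_extendScalars_add_two (hle : ∀ n, F n ≤ F (n + 1))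
    (hrel : ∀ n, relfinrank (F n) (F (n + 1)) = 2) {n : ℕ} (h : F n ≤ F (n + 2)) :
    finrank (F n) (extendScalars h) = 4 := by
  rw [← relfinrank_eq_finrank_of_le, relfinrank_eq_two_pow hle hrel (by omega)]
  norm_num

theorem isBiquadraticAt_of_relfinrank_eq_two [CharZero L] (hle : ∀ n, F n ≤ F (n + 1))
    (hrel : ∀ n, relfinrank (F n) (F (n + 1)) = 2) {n : ℕ} {M : IntermediateField K L}
    (hnM : F n ≤ M) (hM : M ≤ F (n + 2)) (hrelM : relfinrank (F n) M = 2)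
    (hne : M ≠ F (n + 1)) : IsBiquadraticAt F n := by
  have h : F n ≤ F (n + 2) := (hle n).trans (hle (n + 1))
  set A := extendScalars hnM
  set B := extendScalars (hle n)
  have hA : finrank (F n) A = 2 := (relfinrank_eq_finrank_of_le hnM).symm.trans hrelM
  have hB : finrank (F n) B = 2 := (relfinrank_eq_finrank_of_le (hle n)).symm.trans (hrel n)
  have hAB : A ≠ B := fun hAB ↦ hne (congrArg (restrictScalars K) hAB : A.restrictScalars K = _)
  have hE := finrank_extendScalars_add_two hle hrel h
  have : FiniteDimensional (F n) (extendScalars h) := Module.finite_of_finrank_pos (by omega)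
  have hsup : A ⊔ B = extendScalars h :=
    eq_of_le_of_finrank_eq (sup_le hM (hle (n + 1))) ((finrank_sup_eq_four hA hB hAB).trans hE.symm)
  refine ⟨h, ?_⟩
  rw [← hsup]
  exact ⟨isGalois_sup_of_finrank_eq_two hA hB, isKleinFour_sup_of_finrank_eq_two hA hB hAB⟩

theorem exists_relfinrank_eq_two_ne_of_isBiquadraticAt (hle : ∀ n, F n ≤ F (n + 1))
    (hrel : ∀ n, relfinrank (F n) (F (n + 1)) = 2) {n : ℕ} (hn : IsBiquadraticAt F n) :
    ∃ M : IntermediateField K L,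
      F n ≤ M ∧ M ≤ F (n + 2) ∧ relfinrank (F n) M = 2 ∧ M ≠ F (n + 1) := by
  obtain ⟨h, _, _⟩ := hn
  have : FiniteDimensional (F n) (extendScalars h) :=
    Module.finite_of_finrank_pos (by rw [finrank_extendScalars_add_two hle hrel h]; omega)
  have hBE : extendScalars (hle n) ≤ extendScalars h :=
    (extendScalars_le_extendScalars_iff _ _).mpr (hle (n + 1))
  have hB : restrict hBE ≠ ⊥ := fun hB ↦ by
    have h1 := (relfinrank_eq_finrank_of_le (hle n)).symm.trans (hrel n)
    rw [← lift_restrict hBE, hB, lift_bot, IntermediateField.finrank_bot] at h1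
    omega
  obtain ⟨X, hX2, hXB⟩ := exists_finrank_eq_two_ne hB
  have hnX : F n ≤ (lift X).restrictScalars K := fun x hx ↦ (lift X).algebraMap_mem ⟨x, hx⟩
  refine ⟨_, hnX, lift_le X, (relfinrank_eq_finrank_of_le hnX).trans
    ((liftAlgEquiv X).toLinearEquiv.finrank_eq.symm.trans hX2), fun hXn ↦ hXB ?_⟩
  rw [← lift_inj, lift_restrict hBE]
  ext x
  exact SetLike.ext_iff.mp hXn x

theorem not_isThin_of_isBiquadraticAt (hfin : FiniteDimensional K (F 0))
    (hle : ∀ n, F n ≤ F (n + 1)) (hrel : ∀ n, relfinrank (F n) (F (n + 1)) = 2) {n : ℕ}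
    (hn : IsBiquadraticAt F n) : ¬ IsThin F := by
  obtain ⟨M, hnM, hM, hrelM, hMne⟩ := exists_relfinrank_eq_two_ne_of_isBiquadraticAt hle hrel hn
  have := finiteDimensional_of_relfinrank_succ hfin hle hrel (n + 2)
  have hfinM : FiniteDimensional K M :=
    FiniteDimensional.of_injective (inclusion hM).toLinearMap (inclusion hM).toRingHom.injective
  intro hthin
  obtain ⟨j, rfl⟩ := hthin M ((monotone_nat_of_le_succ hle (Nat.zero_le n)).trans hnM)
    (hM.trans (le_iSup F _)) hfinM
  exact hMne (congrArg F (eq_add_one_of_relfinrank_eq_two hle hrel hrelM))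

theorem mem_succ_of_sq_mem_of_not_isBiquadraticAt [CharZero L] (hle : ∀ n, F n ≤ F (n + 1))
    (hrel : ∀ n, relfinrank (F n) (F (n + 1)) = 2) {j : ℕ} (hj : ¬ IsBiquadraticAt F j) {y : L}
    (hy : y ∈ F (j + 2)) (hy2 : y ^ 2 ∈ F j) : y ∈ F (j + 1) := by
  by_contra hy1
  have hyM : y ∈ F j ⊔ K⟮y⟯ := le_sup_right (a := F j) (mem_adjoin_simple_self K y)
  have hM : relfinrank (F j) (F j ⊔ K⟮y⟯) = 2 := by
    refine ((Nat.dvd_prime Nat.prime_two).mp (relfinrank_sup_adjoin_dvd_two (F j) hy2)).resolve_left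
      fun h ↦ hy1 (hle j (relfinrank_eq_one_iff.mp h hyM))
  exact hj <| isBiquadraticAt_of_relfinrank_eq_two hle hrel le_sup_left
    (sup_le ((hle j).trans (hle (j + 1))) (adjoin_simple_le_iff.mpr hy)) hM fun h ↦ hy1 (h ▸ hyM)

theorem mem_succ_of_sq_mem [CharZero L] (hle : ∀ n, F n ≤ F (n + 1))
    (hrel : ∀ n, relfinrank (F n) (F (n + 1)) = 2) (hF : ∀ j, ¬ IsBiquadraticAt F j) {n m : ℕ}
    {y : L} (hy : y ∈ F m) (hy2 : y ^ 2 ∈ F n) : y ∈ F (n + 1) := by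
  induction m with
  | zero => exact monotone_nat_of_le_succ hle (Nat.zero_le _) hy
  | succ m ih =>
    rcases Nat.lt_or_ge m (n + 1) with hm | hm
    · exact monotone_nat_of_le_succ hle hm hy
    · obtain ⟨j, rfl⟩ : ∃ j, m = j + 1 := ⟨m - 1, by omega⟩
      exact ih (mem_succ_of_sq_mem_of_not_isBiquadraticAt hle hrel (hF j) hy
        (monotone_nat_of_le_succ hle (by omega) hy2))

theorem eq_succ_of_relfinrank_eq_two [CharZero L] (hle : ∀ n, F n ≤ F (n + 1))
    (hrel : ∀ n, relfinrank (F n) (F (n + 1)) = 2) (hF : ∀ j, ¬ IsBiquadraticAt F j) {n m : ℕ}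
    {M : IntermediateField K L} (hnM : F n ≤ M) (hMm : M ≤ F m) (hM : relfinrank (F n) M = 2) :
    M = F (n + 1) := by
  obtain ⟨y, hyM, hy2, hM'⟩ := exists_sq_mem_sup_adjoin_eq hnM hM
  have hyn : y ∉ F n := fun h ↦ by
    rw [← hM', relfinrank_eq_one_iff.mpr (sup_le le_rfl (adjoin_simple_le_iff.mpr h))] at hM
    omega
  rw [← hM']
  exact sup_adjoin_eq_of_relfinrank_prime (hle n) (hrel n ▸ Nat.prime_two)
    (mem_succ_of_sq_mem hle hrel hF (hMm hyM) hy2) hyn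

theorem exists_normal_two_pow_ge [IsAlgClosed L] [NeZero (2 : L)] (hle : ∀ n, F n ≤ F (n + 1))
    (hrel : ∀ n, relfinrank (F n) (F (n + 1)) = 2) (n m : ℕ) :
    ∃ N : IntermediateField (F n) L,
      F m ≤ N.restrictScalars K ∧ Normal (F n) N ∧ ∃ t, finrank (F n) N = 2 ^ t := by
  induction m with
  | zero =>
    refine ⟨⊥, fun x hx ↦ ?_, inferInstance, 0, IntermediateField.finrank_bot⟩
    exact ⟨⟨x, monotone_nat_of_le_succ hle (Nat.zero_le n) hx⟩, rfl⟩
  | succ m ih =>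
    obtain ⟨N, hmN, hN, t, ht⟩ := ih
    obtain ⟨y, -, hy2, hy⟩ := exists_sq_mem_sup_adjoin_eq (hle m) (hrel m)
    obtain ⟨N', hNN', hyN', hN', ht'⟩ := exists_normal_two_pow_of_sq_mem ht (hmN hy2)
    refine ⟨N', ?_, hN', ht'⟩
    rw [← hy]
    exact sup_le (fun x hx ↦ hNN' (hmN hx)) (adjoin_simple_le_iff.mpr hyN')

theorem exists_relfinrank_eq_two_le [IsAlgClosed L] [CharZero L] (hle : ∀ n, F n ≤ F (n + 1))
    (hrel : ∀ n, relfinrank (F n) (F (n + 1)) = 2) {n m : ℕ} {M : IntermediateField K L}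
    (hnM : F n < M) (hMm : M ≤ F m) :
    ∃ X : IntermediateField K L, F n ≤ X ∧ X ≤ M ∧ relfinrank (F n) X = 2 := by
  obtain ⟨N, hmN, hN, t, ht⟩ := exists_normal_two_pow_ge hle hrel n m
  have : FiniteDimensional (F n) N := Module.finite_of_finrank_pos (ht ▸ by positivity)
  have : IsGalois (F n) N := {}
  have hM : extendScalars hnM.le ≠ ⊥ := fun h ↦ hnM.ne' <| by
    rw [← extendScalars_restrictScalars hnM.le, h, restrictScalars_bot_eq_self]
  obtain ⟨X, hXM, hX⟩ := exists_le_finrank_eq_two_of_le ht (fun x hx ↦ hmN (hMm hx)) hM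
  have hnX : F n ≤ X.restrictScalars K := fun x hx ↦ X.algebraMap_mem ⟨x, hx⟩
  exact ⟨X.restrictScalars K, hnX, hXM, (relfinrank_eq_finrank_of_le hnX).trans hX⟩

theorem isThin_of_forall_not_isBiquadraticAt [IsAlgClosed L] [CharZero L]
    (hle : ∀ n, F n ≤ F (n + 1)) (hrel : ∀ n, relfinrank (F n) (F (n + 1)) = 2)
    (hF : ∀ j, ¬ IsBiquadraticAt F j) : IsThin F := by
  intro M h0M hM _
  obtain ⟨m, hMm⟩ := exists_le_of_le_iSup (monotone_nat_of_le_succ hle) hM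
  suffices ∀ d n, n + d = m → F n ≤ M → ∃ j, M = F j from this m 0 (zero_add m) h0M
  intro d
  induction d with
  | zero =>
    rintro n rfl hnM
    exact ⟨n, le_antisymm hMm hnM⟩
  | succ d ih =>
    intro n hn hnM
    by_cases hMn : M = F n
    · exact ⟨n, hMn⟩
    obtain ⟨X, hnX, hXM, hX⟩ :=
      exists_relfinrank_eq_two_le hle hrel (lt_of_le_of_ne hnM (Ne.symm hMn)) hMm
    rw [eq_succ_of_relfinrank_eq_two hle hrel hF hnX (hXM.trans hMm) hX] at hXM
    exact ih (n + 1) (by omega) hXM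

theorem isThin_iff_forall_not_isBiquadraticAt [IsAlgClosed L] [CharZero L]
    (hfin : FiniteDimensional K (F 0)) (hle : ∀ n, F n ≤ F (n + 1))
    (hrel : ∀ n, relfinrank (F n) (F (n + 1)) = 2) : IsThin F ↔ ∀ n, ¬ IsBiquadraticAt F n :=
  ⟨fun hthin _ hn ↦ not_isThin_of_isBiquadraticAt hfin hle hrel hn hthin,
    isThin_of_forall_not_isBiquadraticAt hle hrel⟩

end Tower

theorem stmt_4 (F : ℕ → IntermediateField ℚ (AlgebraicClosure ℚ))
    (hfin : FiniteDimensional ℚ (F 0))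
    (hle : ∀ n, F n ≤ F (n + 1))
    (hdeg : ∀ n, Module.finrank ℚ (F (n + 1)) = 2 * Module.finrank ℚ (F n)) :
    ¬ (∀ L : IntermediateField ℚ (AlgebraicClosure ℚ),
        F 0 ≤ L → L ≤ ⨆ n, F n → FiniteDimensional ℚ L → ∃ n, L = F n) ↔
      ∃ n, ∃ h : F n ≤ F (n + 2),
        IsGalois (F n) (extendScalars h) ∧
        Nonempty ((extendScalars h ≃ₐ[F n] extendScalars h) ≃* (Multiplicative (ZMod 2 × ZMod 2))) := by
  have hrel := relfinrank_succ_eq_two hfin hdeg hle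
  refine (not_congr (isThin_iff_forall_not_isBiquadraticAt hfin hle hrel)).trans ?_
  simp only [not_forall, not_not, IsBiquadraticAt, isKleinFour_iff_nonempty_mulEquiv]
end

section
/- Let ℓ ≥ 2 be an integer, (Fₙ)ₙ≥0 a 2-tower with F = ∪ₙFₙ, and suppose the subtower (Fₙ)ₙ≥1 is thin. If L is a subfield of F containing F₀ which is not contained in F_ℓ, then [L : F₀] ≥ 2^ℓ. Consequently, if [L : F₀] = 2^k for some k ≥ 1, then L ⊆ F_{k+1}. -/
open IntermediateField

set_option maxHeartbeats 2000000 in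
set_option synthInstance.maxHeartbeats 1000000 in

theorem stmt_6 (ℓ : ℕ) (hℓ : 2 ≤ ℓ)
    (F : ℕ → IntermediateField ℚ (AlgebraicClosure ℚ))
    (hfin : FiniteDimensional ℚ (F 0))
    (hle : ∀ n, F n ≤ F (n + 1))
    (hdeg : ∀ n, Module.finrank ℚ (F (n + 1)) = 2 * Module.finrank ℚ (F n))
    (hthin : ∀ L : IntermediateField ℚ (AlgebraicClosure ℚ),
      F 1 ≤ L → L ≤ ⨆ n, F n → FiniteDimensional ℚ L → ∃ n, 1 ≤ n ∧ L = F n)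
    (L : IntermediateField ℚ (AlgebraicClosure ℚ))
    (hL0 : F 0 ≤ L) (hLF : L ≤ ⨆ n, F n) :
    (¬ L ≤ F ℓ → (2 ^ ℓ : Cardinal) ≤ Module.rank (F 0) (extendScalars hL0)) ∧
    (∀ k : ℕ, 1 ≤ k → Module.finrank (F 0) (extendScalars hL0) = 2 ^ k →
      L ≤ F (k + 1)) := by
  have hmono : Monotone F := monotone_nat_of_le_succ hle
  have hd0 : 0 < Module.finrank ℚ (F 0) := Module.finrank_pos
  have hrank : ∀ n, Module.finrank ℚ (F n) = 2 ^ n * Module.finrank ℚ (F 0) := by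
    intro n
    induction n with
    | zero => simp
    | succ n ih => rw [hdeg n, ih, pow_succ]; ring
  have hfd : ∀ n, FiniteDimensional ℚ (F n) := by
    intro n
    refine FiniteDimensional.of_finrank_pos ?_
    rw [hrank n]; positivity
  have hF0n : ∀ n, F 0 ≤ F n := fun n => hmono (Nat.zero_le n)
  have hcongr : ∀ (E E' : IntermediateField ℚ (AlgebraicClosure ℚ)) (hE : F 0 ≤ E)
      (hE' : F 0 ≤ E'), E = E' →
      Module.finrank (F 0) (extendScalars hE) = Module.finrank (F 0) (extendScalars hE') := by
    rintro E E' hE hE' rfl; rfl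
  have hrel : ∀ n, Module.finrank (F 0) (extendScalars (hF0n n)) = 2 ^ n := by
    intro n
    have h1 := Module.finrank_mul_finrank ℚ (F 0) (extendScalars (hF0n n))
    have h2 : Module.finrank ℚ (extendScalars (hF0n n)) = Module.finrank ℚ (F n) := rfl
    rw [h2, hrank n] at h1
    have := hd0
    exact Nat.eq_of_mul_eq_mul_left hd0 (by rw [h1]; ring)
  have key : ∀ m, ¬ L ≤ F m →
      (2 ^ m : Cardinal) ≤ Module.rank (F 0) (extendScalars hL0) := by
    intro m hm
    by_cases hfdL : FiniteDimensional (F 0) (extendScalars hL0)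
    · have hfdLQ : FiniteDimensional ℚ L := by
        have : Module.Finite ℚ (extendScalars hL0) :=
          Module.Finite.trans (R := ℚ) (↥(F 0)) (extendScalars hL0)
        exact this
      have hsup_fd : FiniteDimensional ℚ ↥(L ⊔ F 1) := by
        have := hfd 1
        exact IntermediateField.finiteDimensional_sup L (F 1)
      obtain ⟨n, hn1, heq⟩ := hthin (L ⊔ F 1) le_sup_right
        (sup_le hLF (le_iSup F 1)) hsup_fd
      have hLn : L ≤ F n := heq ▸ (le_sup_left : L ≤ L ⊔ F 1)
      have hmn : m < n := by
        by_contra h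
        push_neg at h
        exact hm (hLn.trans (hmono h))
      have hb := IntermediateField.finrank_sup_le (K := ↥(F 0))
        (E1 := extendScalars hL0) (E2 := extendScalars (hF0n 1))
      rw [extendScalars_sup] at hb
      rw [hcongr _ _ _ (hF0n n) heq] at hb
      rw [hrel n, hrel 1] at hb
      -- hb : 2 ^ n ≤ finrank F0 L * 2 ^ 1
      set r := Module.finrank (F 0) (extendScalars hL0) with hr
      have hge : 2 ^ m ≤ r := by
        have h2 : 2 ^ (m + 1) ≤ r * 2 := by
          calc 2 ^ (m + 1) ≤ 2 ^ n := Nat.pow_le_pow_right (by norm_num) hmn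
          _ ≤ r * 2 ^ 1 := hb
          _ = r * 2 := by ring
        omega
      rw [← Module.finrank_eq_rank]
      calc (2 ^ m : Cardinal) = ((2 ^ m : ℕ) : Cardinal) := by push_cast; ring
      _ ≤ (r : Cardinal) := by exact_mod_cast hge
    · have hfdL' : Cardinal.aleph0 ≤ Module.rank (F 0) (extendScalars hL0) := by
        rw [← not_lt]
        intro hlt
        exact hfdL (Module.rank_lt_aleph0_iff.mp hlt)
      calc (2 ^ m : Cardinal) = ((2 ^ m : ℕ) : Cardinal) := by push_cast; ring
      _ ≤ Cardinal.aleph0 := (Cardinal.nat_lt_aleph0 _).le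
      _ ≤ _ := hfdL'
  constructor
  · exact key ℓ
  · intro k hk hfk
    by_contra hnot
    have h1 := key (k + 1) hnot
    have hfd' : FiniteDimensional (F 0) (extendScalars hL0) :=
      FiniteDimensional.of_finrank_pos (by rw [hfk]; positivity)
    rw [← Module.finrank_eq_rank, hfk] at h1
    have h4 : (2 ^ (k + 1) : ℕ) ≤ 2 ^ k := by exact_mod_cast h1
    have : (2 ^ k : ℕ) < 2 ^ (k + 1) := Nat.pow_lt_pow_right (by norm_num) (Nat.lt_succ_self k)
    omega
end

section
/- Fix integers ν ≥ 2 and x₀ ≥ 0 and a sequence (xₙ) with x_{n+1}² = ν + xₙ for all n ≥ 0, where each xₙ generates a degree-2 extension Kₙ₊₁ = ℚ(x_{n+1}) of Kₙ = ℚ(xₙ). Define u₀ = ν² - ν and u_{n+1} = uₙ² - ν. Then for all n ≥ ℓ ≥ 0 and all j ≥ 0, the norm from Kₙ to K_ℓ of u_j - xₙ equals u_{j+n-ℓ} - x_ℓ. -/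
/-!
If `t ∉ F` and `t² = c ∈ F`, multiplication by `a - t` on the basis `1, t` of `F(t)/F` has
matrix `[[a, -c], [-1, a]]`, so `N(a - t) = a² - c`.
Applied with `t = x_{n+1}`, `t² = ν + x_n`, one norm step sends `u_j - x_{n+1}` to
`u_j² - ν - x_n = u_{j+1} - x_n`; transitivity of norms in the tower `K_ℓ ⊆ K_n ⊆ K_{n+1}`
and induction on `n - ℓ` give the claim.
-/

open IntermediateField

open Module in
theorem Algebra.norm_algebraMap_sub_of_sq_eq {K L : Type*} [Field K] [Field L] [Algebra K L]
    (h2 : finrank K L = 2) {t : L} (ht : t ∉ Set.range (algebraMap K L)) {c : K}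
    (htc : t ^ 2 = algebraMap K L c) (a : K) :
    norm K (algebraMap K L a - t) = a ^ 2 - c := by
  have hli : LinearIndependent K ![1, t] :=
    (LinearIndependent.pair_iff' one_ne_zero).2 fun b hb =>
      ht ⟨b, by rwa [Algebra.algebraMap_eq_smul_one]⟩
  let b := basisOfLinearIndependentOfCardEqFinrank hli (by simp [h2])
  have hb : ⇑b = ![1, t] := coe_basisOfLinearIndependentOfCardEqFinrank hli _
  have h0 : (algebraMap K L a - t) * b 0 = a • b 0 - b 1 := by simp [hb, Algebra.smul_def]
  have h1 : (algebraMap K L a - t) * b 1 = a • b 1 - c • b 0 := by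
    simp [hb, Algebra.smul_def, ← htc]
    ring
  have hm : leftMulMatrix b (algebraMap K L a - t) = !![a, -c; -1, a] := by
    ext i j
    rw [leftMulMatrix_eq_repr_mul]
    fin_cases i <;> fin_cases j <;> simp [h0, h1]
  rw [norm_eq_matrix_det b, hm, Matrix.det_fin_two_of]
  ring

variable {k Ω : Type*} [Field k] [Field Ω] [Algebra k Ω]

namespace IntermediateField

theorem norm_extendScalars_self {E : IntermediateField k Ω} (h : E ≤ E) (z : extendScalars h) :
    (Algebra.norm E z : Ω) = z := by
  have hrank : Module.finrank E (extendScalars h) = 1 := by simp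
  have hz : z = algebraMap E (extendScalars h) ⟨z, z.2⟩ := rfl
  rw [hz, Algebra.norm_algebraMap, hrank, pow_one]
  rfl

theorem norm_extendScalars_trans {E F G : IntermediateField k Ω}
    (hEF : E ≤ F) (hFG : F ≤ G) (hEG : E ≤ G) (z : extendScalars hEG) :
    Algebra.norm E z =
      Algebra.norm E (⟨Algebra.norm F (⟨z, z.2⟩ : extendScalars hFG),
        (Algebra.norm F _).2⟩ : extendScalars hEF) := by
  let : Algebra (extendScalars hEF) (extendScalars hEG) :=
    (inclusion (show extendScalars hEF ≤ extendScalars hEG from hFG)).toAlgebra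
  have : IsScalarTower E (extendScalars hEF) (extendScalars hEG) :=
    .of_algebraMap_eq fun _ => rfl
  rw [← Algebra.norm_norm (S := extendScalars hEF)]
  -- `extendScalars hEF` is `F` with the same carrier and operations
  rfl

theorem notMem_of_finrank_extendScalars_ne_one {F G : IntermediateField k Ω} (hFG : F ≤ G)
    (hr : Module.finrank F (extendScalars hFG) ≠ 1) {t : Ω} (hG : G = k⟮t⟯) : t ∉ F := by
  intro ht
  obtain rfl : G = F := le_antisymm (hG ▸ adjoin_simple_le_iff.2 ht) hFG
  simp at hr

theorem norm_extendScalars_sub_eq {F G : IntermediateField k Ω} (hFG : F ≤ G)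
    (h2 : Module.finrank F (extendScalars hFG) = 2) {t : Ω} (htF : t ∉ F) (ht2 : t ^ 2 ∈ F)
    {a : Ω} (ha : a ∈ F) (z : extendScalars hFG) (hz : (z : Ω) = a - t) :
    (Algebra.norm F z : Ω) = a ^ 2 - t ^ 2 := by
  have htG : t ∈ extendScalars hFG := by
    rw [show t = a - z by rw [hz]; ring]
    exact sub_mem (hFG ha) z.2
  have hz' : z = algebraMap F _ ⟨a, ha⟩ - ⟨t, htG⟩ := Subtype.ext hz
  have htc : (⟨t, htG⟩ : extendScalars hFG) ^ 2 = algebraMap F _ ⟨t ^ 2, ht2⟩ := rfl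
  have ht : (⟨t, htG⟩ : extendScalars hFG) ∉ Set.range (algebraMap F _) :=
    fun ⟨w, hw⟩ => htF (congrArg Subtype.val hw ▸ w.2 :)
  rw [hz', Algebra.norm_algebraMap_sub_of_sq_eq h2 ht htc]
  rfl

end IntermediateField

theorem norm_sub_of_sqrt_tower {ν : k} {u : ℕ → k} {x : ℕ → Ω}
    {K : ℕ → IntermediateField k Ω}
    (hu : ∀ n, u (n + 1) = u n ^ 2 - ν)
    (hx : ∀ n, x (n + 1) ^ 2 = algebraMap k Ω ν + x n) (hK : ∀ n, K n = k⟮x n⟯)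
    (hle : ∀ n, K n ≤ K (n + 1))
    (hdeg : ∀ n, Module.finrank (K n) (extendScalars (hle n)) = 2)
    (ℓ m : ℕ) (h : K ℓ ≤ K (ℓ + m)) (j : ℕ) (z : extendScalars h)
    (hz : (z : Ω) = algebraMap k Ω (u j) - x (ℓ + m)) :
    (Algebra.norm (K ℓ) z : Ω) = algebraMap k Ω (u (j + m)) - x ℓ := by
  have hxK : ∀ n, x n ∈ K n := fun n => hK n ▸ mem_adjoin_simple_self k (x n)
  induction m generalizing j with
  | zero => rw [norm_extendScalars_self, hz]; rfl
  | succ m ih =>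
    have hm : K ℓ ≤ K (ℓ + m) := monotone_nat_of_le_succ hle (Nat.le_add_right ℓ m)
    have hnot : x (ℓ + m + 1) ∉ K (ℓ + m) :=
      notMem_of_finrank_extendScalars_ne_one (hle _) (by simp [hdeg]) (hK _)
    have hsq : x (ℓ + m + 1) ^ 2 ∈ K (ℓ + m) := by
      rw [hx]
      exact add_mem (IntermediateField.algebraMap_mem _ ν) (hxK _)
    have hstep : (Algebra.norm (K (ℓ + m)) (⟨z, z.2⟩ : extendScalars (hle (ℓ + m))) : Ω) =
        algebraMap k Ω (u (j + 1)) - x (ℓ + m) := by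
      refine (norm_extendScalars_sub_eq (hle _) (hdeg _) hnot hsq
        (IntermediateField.algebraMap_mem _ (u j)) ⟨z, z.2⟩ hz).trans ?_
      rw [hx, hu, map_sub, map_pow]
      ring
    rw [norm_extendScalars_trans hm (hle (ℓ + m)) h, show j + (m + 1) = j + 1 + m by omega]
    exact ih hm (j + 1) _ hstep

theorem stmt_7 (ν : ℤ)
    (x : ℕ → ℝ) (hx : ∀ n, (x (n + 1)) ^ 2 = ν + x n)
    (K : ℕ → IntermediateField ℚ ℝ) (hK : ∀ n, K n = IntermediateField.adjoin ℚ {x n})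
    (hle : ∀ n, K n ≤ K (n + 1))
    (hdeg : ∀ n, Module.finrank (K n) (extendScalars (hle n)) = 2)
    (u : ℕ → ℤ) (hu : ∀ n, u (n + 1) = (u n) ^ 2 - ν)
    (j ℓ n : ℕ) (hln : ℓ ≤ n) (h : K ℓ ≤ K n) :
    ((Algebra.norm (K ℓ)
        (⟨(u j : ℝ) - x n, by
          rw [mem_extendScalars, hK n]
          exact sub_mem (IntermediateField.intCast_mem _ _)
            (IntermediateField.mem_adjoin_simple_self ℚ (x n))⟩ :
          extendScalars h) : K ℓ) : ℝ)
      = (u (j + n - ℓ) : ℝ) - x ℓ := by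
  obtain ⟨m, rfl⟩ := Nat.exists_eq_add_of_le hln
  rw [show j + (ℓ + m) - ℓ = j + m by omega]
  refine (norm_sub_of_sqrt_tower (ν := (ν : ℚ)) (u := fun n => (u n : ℚ))
    (by exact_mod_cast hu) (by simpa using hx) hK hle hdeg ℓ m h j _ ?_).trans ?_ <;> simp
end

section
/- With xₙ, Kₙ as in the tower setup (x_{n+1}² = ν + xₙ, [K_{n+1}:Kₙ] = 2), for every n ≥ 1 the norm from Kₙ to K_{n-1} of ν + xₙ equals (ν² - ν) - x_{n-1}. -/
open IntermediateField Polynomial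

set_option maxHeartbeats 1000000 in
set_option synthInstance.maxHeartbeats 400000 in
theorem stmt_8 (ν x₀ : ℤ) (hν : 2 ≤ ν) (hx₀ : 0 ≤ x₀)
    (x : ℕ → ℝ) (hx0 : x 0 = x₀) (hx : ∀ n, (x (n + 1)) ^ 2 = ν + x n)
    (K : ℕ → IntermediateField ℚ ℝ) (hK : ∀ n, K n = IntermediateField.adjoin ℚ {x n})
    (hle : ∀ n, K n ≤ K (n + 1))
    (hdeg : ∀ n, Module.finrank (K n) (extendScalars (hle n)) = 2)
    (n : ℕ) :
    ((Algebra.norm (K n)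
        (⟨(ν : ℝ) + x (n + 1), by
          rw [mem_extendScalars, hK (n + 1)]
          exact add_mem (IntermediateField.intCast_mem _ _)
            (IntermediateField.mem_adjoin_simple_self ℚ (x (n + 1)))⟩ :
          extendScalars (hle n)) : K n) : ℝ)
      = ((ν : ℝ) ^ 2 - ν) - x n := by
  have hxnK : x n ∈ K n := by rw [hK n]; exact mem_adjoin_simple_self ℚ (x n)
  set L := extendScalars (hle n) with hLdef
  have hmem : (ν : ℝ) + x (n + 1) ∈ L := by
    rw [mem_extendScalars, hK (n + 1)]
    exact add_mem (IntermediateField.intCast_mem _ _)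
      (IntermediateField.mem_adjoin_simple_self ℚ (x (n + 1)))
  set a : L := ⟨(ν : ℝ) + x (n + 1), hmem⟩ with ha
  show ((Algebra.norm (K n) a : K n) : ℝ) = ((ν : ℝ) ^ 2 - ν) - x n
  set ξ : K n := ⟨x n, hxnK⟩ with hξ
  set c : K n := (ν : K n) ^ 2 - (ν : K n) - ξ with hc
  set p : Polynomial (K n) := X ^ 2 - C ((ν : K n) + (ν : K n)) * X + C c with hp
  have hpmonic : p.Monic := by
    rw [hp]; monicity!
  have hpdeg : p.natDegree = 2 := by rw [hp]; compute_degree!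
  have hcoe : ∀ k : K n, ((algebraMap (K n) L k : L) : ℝ) = (k : ℝ) := fun k => rfl
  have hcx : ((c : K n) : ℝ) = (ν : ℝ) ^ 2 - (ν : ℝ) - x n := by
    rw [hc]
    push_cast [hξ]
    ring
  have hax : ((a : L) : ℝ) = (ν : ℝ) + x (n + 1) := rfl
  have haeval : Polynomial.aeval a p = 0 := by
    have h1 : ((Polynomial.aeval a p : L) : ℝ)
        = ((a : ℝ)) ^ 2 - ((ν : ℝ) + (ν : ℝ)) * (a : ℝ) + ((c : ℝ)) := by
      rw [hp]
      simp only [map_add, map_sub, map_mul, map_pow, aeval_X, aeval_C]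
      push_cast [hcoe]
      ring
    apply Subtype.ext
    rw [h1, hax, hcx]
    show _ = (0 : ℝ)
    have h2 := hx n
    nlinarith [h2]
  have hint : IsIntegral (K n) a := ⟨p, hpmonic, haeval⟩
  have hdvd : minpoly (K n) a ∣ p := minpoly.dvd _ _ haeval
  have hdle : (minpoly (K n) a).natDegree ≤ 2 :=
    hpdeg ▸ Polynomial.natDegree_le_of_dvd hdvd hpmonic.ne_zero
  have hdpos : 0 < (minpoly (K n) a).natDegree := minpoly.natDegree_pos hint
  have hne1 : (minpoly (K n) a).natDegree ≠ 1 := by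
    intro h1
    obtain ⟨k, hk⟩ := (minpoly.natDegree_eq_one_iff).mp h1
    -- then x (n+1) ∈ K n
    have hxK : x (n + 1) ∈ K n := by
      have : ((k : ℝ)) = (ν : ℝ) + x (n + 1) := by
        rw [← hax, ← hk]; exact (hcoe k).symm
      have : x (n + 1) = ((k - (ν : K n) : K n) : ℝ) := by push_cast; linarith
      rw [this]; exact (k - (ν : K n)).2
    have hle' : K (n + 1) ≤ K n := by
      rw [hK (n + 1)]
      exact adjoin_le_iff.mpr (by simpa using hxK)
    have hbot : L = ⊥ := by
      apply IntermediateField.toSubalgebra_injective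
      apply Subalgebra.ext
      intro y
      simp only [IntermediateField.mem_toSubalgebra]
      rw [hLdef, mem_extendScalars, IntermediateField.mem_bot]
      constructor
      · intro hy
        exact ⟨⟨y, hle' hy⟩, rfl⟩
      · rintro ⟨z, rfl⟩
        exact hle n z.2
    have := hdeg n
    rw [← hLdef, hbot, IntermediateField.finrank_bot] at this
    exact absurd this (by norm_num)
  have hdeq : (minpoly (K n) a).natDegree = 2 := by omega
  have hpeq : minpoly (K n) a = p :=
    (Polynomial.eq_of_monic_of_dvd_of_natDegree_le (minpoly.monic hint) hpmonic hdvd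
      (by rw [hpdeg, hdeq])).symm
  have hFD : FiniteDimensional (K n) L := by
    refine FiniteDimensional.of_finrank_pos ?_
    rw [hLdef] at *
    rw [hdeg n]
    norm_num
  have hadj : (K n)⟮(a : L)⟯ = (⊤ : IntermediateField (K n) L) := by
    apply IntermediateField.eq_of_le_of_finrank_le le_top
    rw [IntermediateField.finrank_top', adjoin.finrank hint, hdeq]
    rw [hLdef, hdeg n]
  let pb := IntermediateField.adjoin.powerBasis hint
  let e := (IntermediateField.equivOfEq hadj).trans
    (IntermediateField.topEquiv (F := (K n)) (E := L))
  let pb' := pb.map e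
  have hgen : pb'.gen = a := rfl
  have hdim : pb'.dim = 2 := by
    show pb.dim = 2
    show (minpoly (K n) a).natDegree = 2
    exact hdeq
  have hnorm := Algebra.PowerBasis.norm_gen_eq_coeff_zero_minpoly pb'
  rw [hgen, hdim, hpeq] at hnorm
  have hcoeff : p.coeff 0 = c := by
    rw [hp]
    simp
  rw [hcoeff] at hnorm
  rw [hnorm]
  push_cast [hcx]
  ring
end

section
/- Let ν ≥ 3 and x₀ ≥ 0 be integers with 2ν² - 3ν > x₀ + 1, and suppose ν + x₀ is not a perfect square. Define u₀ = ν² - ν and u_{n+1} = uₙ² - ν. Then for every n ≥ 1, uₙ - x₀ is not a perfect square. -/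
theorem stmt_10 (ν x₀ : ℤ) (hν : 3 ≤ ν) (hx₀ : 0 ≤ x₀)
    (hbound : 2 * ν ^ 2 - 3 * ν > x₀ + 1)
    (hnsq : ¬ ∃ z : ℤ, ν + x₀ = z ^ 2)
    (u : ℕ → ℤ) (hu0 : u 0 = ν ^ 2 - ν) (hu : ∀ n, u (n + 1) = (u n) ^ 2 - ν) :
    ∀ n ≥ 1, ¬ ∃ z : ℤ, u n - x₀ = z ^ 2 := by
  have hmono : ∀ n, ν ^ 2 - ν ≤ u n := by
    intro n
    induction n with
    | zero => rw [hu0]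
    | succ m ih =>
      rw [hu m]
      nlinarith [ih]
  rintro n hn ⟨z, hz⟩
  obtain ⟨m, rfl⟩ : ∃ m, n = m + 1 := ⟨n - 1, by omega⟩
  have ha := hmono m
  rw [hu m] at hz
  have habs := abs_nonneg z
  have hsq := sq_abs z
  have hw : |z| ≤ u m - 1 := by nlinarith
  nlinarith
end

section
/- Let ν ≥ 3 and x₀ ≥ 0 be integers such that ν + x₀ is not a perfect square, and define u₀ = ν² - ν, u_{n+1} = uₙ² - ν, and fₙ = (u_{n-1} - x₀)(uₙ - x₀) for n ≥ 1. Then there are only finitely many n ≥ 1 for which fₙ is a perfect square. -/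
set_option maxHeartbeats 1000000

/-- Auxiliary: if `(w² - c)((w² - c + x₀)² - c) = z²` and `w` is large compared to the
fixed constants, then the "error term" `e1 * w² + 4C` must vanish, by a gap-between-
consecutive-squares argument around `2w³ + aw`. -/
lemma stmt_13_aux (c x₀ a e1 C K w z : ℤ)
    (ha : a = 2 * x₀ - 3 * c)
    (he1 : e1 = c * (3 * c - 4 * x₀ - 4))
    (hC : C = -c * ((c - x₀) ^ 2 - c))
    (hK : K = |e1| + 4 * |C|)
    (haw : |a| ≤ w) (hKw : K + 1 ≤ w)
    (hQ : (w ^ 2 - c) * ((w ^ 2 - c + x₀) ^ 2 - c) = z ^ 2) :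
    e1 * w ^ 2 + 4 * C = 0 := by
  have hK0 : 0 ≤ K := by rw [hK]; positivity
  have hw1 : 1 ≤ w := by linarith
  have hident : (2 * z) ^ 2 = (2 * w ^ 3 + a * w) ^ 2 + (e1 * w ^ 2 + 4 * C) := by
    rw [ha, he1, hC]
    linear_combination (-4 : ℤ) * hQ
  by_contra hE0
  obtain ⟨E, hEdef⟩ : ∃ E : ℤ, E = e1 * w ^ 2 + 4 * C := ⟨_, rfl⟩
  obtain ⟨P, hPdef⟩ : ∃ P : ℤ, P = 2 * w ^ 3 + a * w := ⟨_, rfl⟩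
  rw [← hEdef] at hE0
  rw [← hEdef, ← hPdef] at hident
  have haw' := abs_le.mp haw
  have hw2 : 1 ≤ w ^ 2 := by
    have h1 : 0 ≤ (w - 1) * (w + 1) :=
      mul_nonneg (by linarith) (by linarith)
    have h2 : (w - 1) * (w + 1) = w ^ 2 - 1 := by ring
    linarith
  have hw3 : w ^ 2 ≤ w ^ 3 := by
    have h1 : 0 ≤ w ^ 2 * (w - 1) := mul_nonneg (sq_nonneg w) (by linarith)
    have h2 : w ^ 2 * (w - 1) = w ^ 3 - w ^ 2 := by ring
    linarith
  have hP : w ^ 3 ≤ P := by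
    rw [hPdef]
    have h1 : -w * w ≤ a * w := mul_le_mul_of_nonneg_right haw'.1 (by linarith)
    have h2 : -w * w = -(w ^ 2) := by ring
    linarith
  have hP1 : 1 ≤ P := by linarith
  have hEb : |E| ≤ K * w ^ 2 := by
    rw [hEdef, hK]
    have h1 : |e1 * w ^ 2 + 4 * C| ≤ |e1 * w ^ 2| + |4 * C| := abs_add_le _ _
    have h2 : |e1 * w ^ 2| = |e1| * w ^ 2 := by
      rw [abs_mul, abs_of_nonneg (show (0:ℤ) ≤ w ^ 2 by positivity)]
    have h3 : |4 * C| = 4 * |C| := by rw [abs_mul]; norm_num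
    have h4 : 0 ≤ |C| * (w ^ 2 - 1) := mul_nonneg (abs_nonneg C) (by linarith)
    have h5 : |C| * (w ^ 2 - 1) = |C| * w ^ 2 - |C| := by ring
    have h6 : (|e1| + 4 * |C|) * w ^ 2 = |e1| * w ^ 2 + 4 * (|C| * w ^ 2) := by ring
    linarith
  have hEb1 := neg_abs_le E
  have hEb2 := le_abs_self E
  have hKw3 : (K + 1) * w ^ 2 ≤ w ^ 3 := by
    have h1 : (K + 1) * w ^ 2 ≤ w * w ^ 2 := mul_le_mul_of_nonneg_right hKw (sq_nonneg w)
    have h2 : w * w ^ 2 = w ^ 3 := by ring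
    linarith
  have hKexp : (K + 1) * w ^ 2 = K * w ^ 2 + w ^ 2 := by ring
  obtain ⟨y, hy, hy0⟩ : ∃ y : ℤ, y = |2 * z| ∧ 0 ≤ y := ⟨_, rfl, abs_nonneg _⟩
  have hy2 : y ^ 2 = P ^ 2 + E := by rw [hy, sq_abs]; exact hident
  rcases lt_trichotomy y P with h | h | h
  · have h1 : 0 ≤ (P - 1 - y) * (P - 1 + y) :=
      mul_nonneg (by linarith) (by linarith)
    have h2 : (P - 1 - y) * (P - 1 + y) = (P - 1) ^ 2 - y ^ 2 := by ring
    have h3 : (P - 1) ^ 2 = P ^ 2 - 2 * P + 1 := by ring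
    -- E ≤ -2P + 1, so |E| ≥ 2P - 1 ≥ 2w³ - 1 ≥ 2(K+1)w² - 1 > K w² ≥ |E|
    linarith
  · apply hE0
    rw [h] at hy2
    linarith
  · have h1 : 0 ≤ (y - P - 1) * (y + P + 1) :=
      mul_nonneg (by linarith) (by linarith)
    have h2 : (y - P - 1) * (y + P + 1) = y ^ 2 - (P + 1) ^ 2 := by ring
    have h3 : (P + 1) ^ 2 = P ^ 2 + 2 * P + 1 := by ring
    have h4 : 0 ≤ K * w ^ 2 := mul_nonneg hK0 (sq_nonneg w)
    linarith

theorem stmt_13 (ν x₀ : ℤ) (hν : 3 ≤ ν) (hx₀ : 0 ≤ x₀)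
    (hnsq : ¬ ∃ z : ℤ, ν + x₀ = z ^ 2)
    (u : ℕ → ℤ) (hu0 : u 0 = ν ^ 2 - ν) (hu : ∀ n, u (n + 1) = (u n) ^ 2 - ν) :
    {n : ℕ | 1 ≤ n ∧ ∃ z : ℤ, (u (n - 1) - x₀) * (u n - x₀) = z ^ 2}.Finite := by
  -- monotonicity facts
  have hge : ∀ n : ℕ, ν ≤ u n := by
    intro n
    induction n with
    | zero => rw [hu0]; nlinarith
    | succ k ih => rw [hu k]; nlinarith
  have hlin : ∀ n : ℕ, 6 + 3 * (n : ℤ) ≤ u n := by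
    intro n
    induction n with
    | zero => rw [hu0]; push_cast; nlinarith
    | succ k ih =>
      have h1 := hge k
      rw [hu k]; push_cast
      nlinarith [mul_nonneg (show (0:ℤ) ≤ u k - 3 by linarith)
        (show (0:ℤ) ≤ u k by linarith)]
  obtain ⟨c, hc⟩ : ∃ c : ℤ, c = ν + x₀ := ⟨_, rfl⟩
  have hc3 : 3 ≤ c := by rw [hc]; linarith
  obtain ⟨a, ha⟩ : ∃ a : ℤ, a = 2 * x₀ - 3 * c := ⟨_, rfl⟩
  obtain ⟨e1, he1⟩ : ∃ e1 : ℤ, e1 = c * (3 * c - 4 * x₀ - 4) := ⟨_, rfl⟩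
  obtain ⟨C, hC⟩ : ∃ C : ℤ, C = -c * ((c - x₀) ^ 2 - c) := ⟨_, rfl⟩
  obtain ⟨K, hK⟩ : ∃ K : ℤ, K = |e1| + 4 * |C| := ⟨_, rfl⟩
  obtain ⟨B, hB⟩ : ∃ B : ℤ, B = |a| + (K + 1) + 4 * |C| := ⟨_, rfl⟩
  have habs_a := abs_nonneg a
  have habs_e1 := abs_nonneg e1
  have habs_C := abs_nonneg C
  have hK0 : 0 ≤ K := by rw [hK]; linarith
  have hB0 : 1 ≤ B := by rw [hB]; linarith
  have hBa : |a| ≤ B := by rw [hB]; linarith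
  have hBK : K + 1 ≤ B := by rw [hB]; linarith
  have hBC : 4 * |C| ≤ B := by rw [hB]; linarith
  have hCne : C ≠ 0 := by
    intro h
    rw [hC] at h
    rcases mul_eq_zero.mp h with h1 | h1
    · have : c = 0 := neg_eq_zero.mp h1
      linarith
    · exact hnsq ⟨c - x₀, by linarith⟩
  -- conclusion
  apply Set.Finite.subset (Set.finite_Icc 0 (B.toNat + 2))
  rintro n ⟨hn1, z, hz⟩
  simp only [Set.mem_Icc]
  refine ⟨Nat.zero_le n, ?_⟩
  by_contra hgt
  push_neg at hgt
  obtain ⟨m, rfl⟩ : ∃ m, n = m + 2 := ⟨n - 2, by omega⟩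
  have hmB : B < (m : ℤ) := by
    have h1 : B ≤ (B.toNat : ℤ) := Int.self_le_toNat B
    have h2 : B.toNat < m := by omega
    have h3 : ((B.toNat : ℤ)) < (m : ℤ) := by exact_mod_cast h2
    linarith
  obtain ⟨w, hwdef⟩ : ∃ w : ℤ, w = u m := ⟨_, rfl⟩
  have hw1 : 6 + 3 * (m : ℤ) ≤ w := by rw [hwdef]; exact hlin m
  have hm0 : (0 : ℤ) ≤ (m : ℤ) := Int.natCast_nonneg m
  have hwB : B < w := by linarith
  have hQ : (w ^ 2 - c) * ((w ^ 2 - c + x₀) ^ 2 - c) = z ^ 2 := by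
    have e : m + 2 - 1 = m + 1 := rfl
    rw [e] at hz
    rw [hu (m + 1), hu m, ← hwdef] at hz
    rw [hc]
    linear_combination hz
  have hE := stmt_13_aux c x₀ a e1 C K w z ha he1 hC hK
    (by linarith) (by linarith) hQ
  rcases eq_or_ne e1 0 with h1 | h1
  · rw [h1] at hE
    apply hCne
    linarith
  · have h2 : 1 ≤ |e1| := Int.one_le_abs h1
    have h3 : |e1| * w ^ 2 = 4 * |C| := by
      have h4 : e1 * w ^ 2 = -(4 * C) := by linarith
      have h5 : |e1 * w ^ 2| = |(-(4 * C))| := by rw [h4]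
      rw [abs_mul, abs_neg, abs_mul,
        abs_of_nonneg (show (0:ℤ) ≤ w ^ 2 by positivity)] at h5
      simpa using h5
    have h6 : 0 ≤ (|e1| - 1) * w ^ 2 := mul_nonneg (by linarith) (sq_nonneg w)
    have h7 : (|e1| - 1) * w ^ 2 = |e1| * w ^ 2 - w ^ 2 := by ring
    have h8 : 0 ≤ (w - 1) * w := mul_nonneg (by linarith) (by linarith)
    have h9 : (w - 1) * w = w ^ 2 - w := by ring
    linarith
end

section
/- For every integer ν ≥ 3, the discriminant 16(a² + ν⁴ - 2ν³) (where 1 ≤ a ≤ ν - 1) is not a perfect square; more precisely, (ν² - ν - 1)² < a² + ν⁴ - 2ν³ < (ν² - ν)², so a² + ν⁴ - 2ν³ lies strictly between two consecutive squares. -/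
theorem stmt_18 (ν a : ℤ) (hν : 3 ≤ ν) (ha1 : 1 ≤ a) (ha2 : a ≤ ν - 1) :
    ((ν ^ 2 - ν - 1) ^ 2 < a ^ 2 + ν ^ 4 - 2 * ν ^ 3 ∧
      a ^ 2 + ν ^ 4 - 2 * ν ^ 3 < (ν ^ 2 - ν) ^ 2) ∧
    ¬ ∃ z : ℤ, 16 * (a ^ 2 + ν ^ 4 - 2 * ν ^ 3) = z ^ 2 := by
  have h1 : (ν ^ 2 - ν - 1) ^ 2 < a ^ 2 + ν ^ 4 - 2 * ν ^ 3 := by nlinarith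
  have h2 : a ^ 2 + ν ^ 4 - 2 * ν ^ 3 < (ν ^ 2 - ν) ^ 2 := by nlinarith
  refine ⟨⟨h1, h2⟩, ?_⟩
  rintro ⟨z, hz⟩
  have h4 : (4 : ℤ) ∣ z := by
    have : (4:ℤ)^2 ∣ z^2 := ⟨a ^ 2 + ν ^ 4 - 2 * ν ^ 3, by linarith⟩
    exact (Int.pow_dvd_pow_iff (by norm_num)).mp this
  obtain ⟨w, rfl⟩ := h4
  have hw : a ^ 2 + ν ^ 4 - 2 * ν ^ 3 = w ^ 2 := by nlinarith
  rw [hw] at h1 h2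
  have hk : 1 ≤ ν ^ 2 - ν - 1 := by nlinarith
  have habs1 : |w| < ν ^ 2 - ν := abs_lt_of_sq_lt_sq h2 (by nlinarith)
  have habs2 : ν ^ 2 - ν - 1 < |w| := by
    nlinarith [sq_abs w, abs_nonneg w]
  linarith
end
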